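/- Let P⁺ and P⁻ be finite sets of propositional variables and let M0 and M1 be finite Kripke models with worlds x0, x1 such that x0 R0 y for every world y of M0 and x1 R1 y for every world y of M1. Suppose M0 has exactly two clusters C0⁰, C0¹ of final worlds and M1 has exactly two clusters of final worlds. If (M0,x0) →₃^{(P⁺,P⁻)} (M1,x1), then there exist distinct clusters D1⁰ and D1¹ of final worlds of M1 such that C0⁰ matches D1⁰ and C0¹ matches D1¹. -/

import Mathlib

/-- Modal formulas over countably many variables. -/
inductive ModalForm : Type where
  | var : ℕ → ModalForm
  | bot : ModalForm
  | and : ModalForm → ModalForm → ModalForm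
  | or : ModalForm → ModalForm → ModalForm
  | not : ModalForm → ModalForm
  | imp : ModalForm → ModalForm → ModalForm
  | box : ModalForm → ModalForm

namespace ModalForm

mutual
  /-- positively occurring variables -/
  def vpos : ModalForm → Finset ℕ
    | var p => {p}
    | bot => ∅
    | and φ ψ => vpos φ ∪ vpos ψ
    | or φ ψ => vpos φ ∪ vpos ψ
    | not φ => vneg φ
    | imp φ ψ => vneg φ ∪ vpos ψ
    | box φ => vpos φ
  /-- negatively occurring variables -/
  def vneg : ModalForm → Finset ℕ
    | var _ => ∅
    | bot => ∅
    | and φ ψ => vneg φ ∪ vneg ψ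
    | or φ ψ => vneg φ ∪ vneg ψ
    | not φ => vpos φ
    | imp φ ψ => vpos φ ∪ vneg ψ
    | box φ => vneg φ
end

/-- Modal depth: maximal nesting of `□`. -/
def depth : ModalForm → ℕ
  | var _ => 0
  | bot => 0
  | and φ ψ => max (depth φ) (depth ψ)
  | or φ ψ => max (depth φ) (depth ψ)
  | not φ => depth φ
  | imp φ ψ => max (depth φ) (depth ψ)
  | box φ => depth φ + 1

/-- `◇φ := ¬□¬φ` -/
def dia (φ : ModalForm) : ModalForm := not (box (not φ))

/-- `⊤ := ¬⊥` -/
def top : ModalForm := not bot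

end ModalForm

/-- An S4 Kripke frame: nonempty set of worlds with a reflexive transitive relation. -/
structure KFrame : Type 1 where
  W : Type
  R : W → W → Prop
  nonempty : Nonempty W
  refl : ∀ x, R x x
  trans : ∀ x y z, R x y → R y z → R x z

/-- A Kripke model: a frame with a valuation. -/
structure KModel : Type 1 extends KFrame where
  val : W → ℕ → Prop

/-- The model based on frame `F` with valuation `V`. -/
def KFrame.toModel (F : KFrame) (V : F.W → ℕ → Prop) : KModel :=
  { toKFrame := F, val := V }

/-- Satisfaction in a Kripke model. -/
def KModel.Sat (M : KModel) : M.W → ModalForm → Prop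
  | w, .var p => M.val w p
  | _, .bot => False
  | w, .and φ ψ => M.Sat w φ ∧ M.Sat w ψ
  | w, .or φ ψ => M.Sat w φ ∨ M.Sat w ψ
  | w, .not φ => ¬ M.Sat w φ
  | w, .imp φ ψ => M.Sat w φ → M.Sat w ψ
  | w, .box φ => ∀ y, M.R w y → M.Sat y φ

/-- `(M0,w0) →ₙ^{(P⁺,P⁻)} (M1,w1)`: every `(P⁺,P⁻)`-formula of depth ≤ n
satisfied at `(M0,w0)` is satisfied at `(M1,w1)`. -/
def ModalArrow (Pp Pm : Finset ℕ) (n : ℕ) (M0 : KModel) (w0 : M0.W)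
    (M1 : KModel) (w1 : M1.W) : Prop :=
  ∀ φ : ModalForm, φ.vpos ⊆ Pp → φ.vneg ⊆ Pm → φ.depth ≤ n →
    M0.Sat w0 φ → M1.Sat w1 φ

/-- p-morphism between frames. -/
def PMorphism (F G : KFrame) (f : F.W → G.W) : Prop :=
  (∀ x y, F.R x y → G.R (f x) (f y)) ∧
  (∀ x w, G.R (f x) w → ∃ z, F.R x z ∧ f z = w)

/-- The class `C` of Kripke models enjoys `n`-IP. -/
def EnjoysIP (C : Set KModel) (n : ℕ) : Prop :=
  ∀ (Pp Pm : Finset ℕ) (M0 M1 : KModel), M0 ∈ C → M1 ∈ C →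
    ∀ (w0 : M0.W) (w1 : M1.W), ModalArrow Pp Pm n M0 w0 M1 w1 →
      ∃ (F : KFrame) (wstar : F.W) (f0 : F.W → M0.W) (f1 : F.W → M1.W),
        (∀ V : F.W → ℕ → Prop, F.toModel V ∈ C) ∧
        PMorphism F M0.toKFrame f0 ∧
        PMorphism F M1.toKFrame f1 ∧
        f0 wstar = w0 ∧ f1 wstar = w1 ∧
        ∀ x : F.W, ModalArrow Pp Pm 0 M0 (f0 x) M1 (f1 x)

/-- A world is final iff every successor is also a predecessor. -/
def KModel.Final (M : KModel) (w : M.W) : Prop := ∀ y, M.R w y → M.R y w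

/-- The cluster of a world. -/
def KModel.cluster (M : KModel) (w : M.W) : Set M.W := {u | M.R w u ∧ M.R u w}

/-- Cluster `C0` of `M0` matches cluster `C1` of `M1`. -/
def Matches (Pp Pm : Finset ℕ) (M0 M1 : KModel) (C0 : Set M0.W) (C1 : Set M1.W) : Prop :=
  (∀ u0 ∈ C0, ∃ u1 ∈ C1, ModalArrow Pp Pm 0 M0 u0 M1 u1) ∧
  (∀ u1 ∈ C1, ∃ u0 ∈ C0, ModalArrow Pp Pm 0 M0 u0 M1 u1)

/-- `φ` is satisfied at every world of every model in `C`. -/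
def ValidOn (C : Set KModel) (φ : ModalForm) : Prop :=
  ∀ M ∈ C, ∀ w : M.W, M.Sat w φ

/-!
A final cluster `C` of `M0` is pinned down, up to `→₀`, by the depth-one formula
`β C = ⋀_{u ∈ C} ◇ τ u ∧ □ ⋁_{u ∈ C} τ u` (`succFormula`), where `τ u` (`atomType`) is the
`(P⁺,P⁻)`-type of `u`: a final world of `M1` satisfying `β C` lies in a cluster matching `C`.
Two depth-three formulas carry this information from `x0` to `x1`. `◇□ β C` holds at `x0`
(witnessed by `C`), so some final world of `M1` satisfies `β C`; and `□◇(β C⁰ ∨ β C¹)` holds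
at `x0` (every world sees a final one), so each of the two final clusters of `M1` contains a
world satisfying `β C⁰` or `β C¹`. If the final worlds found for `β C⁰` and `β C¹` share a
cluster, the other final cluster of `M1` supplies a replacement for one of them.
-/

open ModalForm

namespace ModalForm

/-- `φ` is a `(P⁺,P⁻)`-formula of modal depth at most `n`. -/
def InFragment (Pp Pm : Finset ℕ) (n : ℕ) (φ : ModalForm) : Prop :=
  φ.vpos ⊆ Pp ∧ φ.vneg ⊆ Pm ∧ φ.depth ≤ n

def conj : List ModalForm → ModalForm
  | [] => top
  | φ :: l => and φ (conj l)

def disj : List ModalForm → ModalForm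
  | [] => bot
  | φ :: l => or φ (disj l)

section InFragment

variable {Pp Pm : Finset ℕ} {n : ℕ} {φ ψ : ModalForm}

@[simp] lemma inFragment_var {p : ℕ} : (var p).InFragment Pp Pm n ↔ p ∈ Pp := by
  simp [InFragment, vpos, vneg, depth]

@[simp] lemma inFragment_bot : bot.InFragment Pp Pm n := by
  simp [InFragment, vpos, vneg, depth]

@[simp] lemma inFragment_not : φ.not.InFragment Pp Pm n ↔ φ.InFragment Pm Pp n := by
  simp only [InFragment, vpos, vneg, depth]
  tauto

@[simp] lemma inFragment_and :
    (φ.and ψ).InFragment Pp Pm n ↔ φ.InFragment Pp Pm n ∧ ψ.InFragment Pp Pm n := by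
  simp only [InFragment, vpos, vneg, depth, Finset.union_subset_iff, max_le_iff]
  tauto

@[simp] lemma inFragment_or :
    (φ.or ψ).InFragment Pp Pm n ↔ φ.InFragment Pp Pm n ∧ ψ.InFragment Pp Pm n := by
  simp only [InFragment, vpos, vneg, depth, Finset.union_subset_iff, max_le_iff]
  tauto

@[simp] lemma inFragment_imp :
    (φ.imp ψ).InFragment Pp Pm n ↔ φ.InFragment Pm Pp n ∧ ψ.InFragment Pp Pm n := by
  simp only [InFragment, vpos, vneg, depth, Finset.union_subset_iff, max_le_iff]
  tauto

@[simp] lemma inFragment_box : φ.box.InFragment Pp Pm (n + 1) ↔ φ.InFragment Pp Pm n := by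
  simp [InFragment, vpos, vneg, depth]

lemma not_inFragment_box_zero : ¬ φ.box.InFragment Pp Pm 0 := by
  simp [InFragment, depth]

@[simp] lemma inFragment_dia : φ.dia.InFragment Pp Pm (n + 1) ↔ φ.InFragment Pp Pm n := by
  simp [dia]

@[simp] lemma inFragment_top : top.InFragment Pp Pm n := by
  simp [top]

lemma inFragment_conj {l : List ModalForm} (h : ∀ φ ∈ l, φ.InFragment Pp Pm n) :
    (conj l).InFragment Pp Pm n := by
  induction l with
  | nil => simp [conj]
  | cons φ l ih => simp_all [conj]

lemma inFragment_disj {l : List ModalForm} (h : ∀ φ ∈ l, φ.InFragment Pp Pm n) :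
    (disj l).InFragment Pp Pm n := by
  induction l with
  | nil => simp [disj]
  | cons φ l ih => simp_all [disj]

end InFragment

end ModalForm

namespace KModel

variable (M : KModel)

lemma sat_dia (w : M.W) (φ : ModalForm) : M.Sat w φ.dia ↔ ∃ v, M.R w v ∧ M.Sat v φ := by
  simp [dia, Sat]

lemma sat_conj (w : M.W) (l : List ModalForm) : M.Sat w (conj l) ↔ ∀ φ ∈ l, M.Sat w φ := by
  induction l with
  | nil => simp [conj, top, Sat]
  | cons φ l ih => simp [conj, Sat, ih]

lemma sat_disj (w : M.W) (l : List ModalForm) : M.Sat w (disj l) ↔ ∃ φ ∈ l, M.Sat w φ := by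
  induction l with
  | nil => simp [disj, Sat]
  | cons φ l ih => simp [disj, Sat, ih]

variable {M}

lemma cluster_eq_of_mem {a b : M.W} (h : b ∈ M.cluster a) : M.cluster a = M.cluster b := by
  ext u
  exact ⟨fun hu => ⟨M.trans _ _ _ h.2 hu.1, M.trans _ _ _ hu.2 h.1⟩,
    fun hu => ⟨M.trans _ _ _ h.1 hu.1, M.trans _ _ _ hu.2 h.2⟩⟩

lemma Final.mem_cluster {a y : M.W} (ha : M.Final a) (h : M.R a y) : y ∈ M.cluster a :=
  ⟨h, ha y h⟩

lemma Final.of_mem_cluster {a b : M.W} (ha : M.Final a) (h : b ∈ M.cluster a) : M.Final b :=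
  fun y hy => M.trans _ _ _ (ha y (M.trans _ _ _ h.1 hy)) h.1

lemma Final.sat_box_iff {a : M.W} (ha : M.Final a) {φ : ModalForm} :
    M.Sat a φ.box ↔ ∀ w ∈ M.cluster a, M.Sat w φ :=
  ⟨fun h w hw => h w hw.1, fun h y hy => h y (ha.mem_cluster hy)⟩

lemma exists_final_of_finite [Finite M.W] (v : M.W) : ∃ f, M.R v f ∧ M.Final f := by
  -- strict ascent along `R` is well founded on a finite frame; take a maximal successor of `v`
  let r : M.W → M.W → Prop := fun a b => M.R b a ∧ ¬ M.R a b
  have : IsTrans M.W r :=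
    ⟨fun a b c hab hbc => ⟨M.trans _ _ _ hbc.1 hab.1, fun hac => hbc.2 (M.trans _ _ _ hab.1 hac)⟩⟩
  have : Std.Irrefl r := ⟨fun a ha => ha.2 ha.1⟩
  obtain ⟨m, hvm, hmax⟩ :=
    (Finite.wellFounded_of_trans_of_irrefl r).has_min {w | M.R v w} ⟨v, M.refl v⟩
  exact ⟨m, hvm, fun y hmy => by_contra fun hym => hmax y (M.trans _ _ _ hvm hmy) ⟨hmy, hym⟩⟩

end KModel

section Types

variable {Pp Pm : Finset ℕ} {M N : KModel}

def AtomsLE (Pp Pm : Finset ℕ) (u : M.W) (w : N.W) : Prop :=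
  (∀ p ∈ Pp, M.val u p → N.val w p) ∧ (∀ p ∈ Pm, N.val w p → M.val u p)

lemma AtomsLE.refl (u : M.W) : AtomsLE Pp Pm u u :=
  ⟨fun _ _ h => h, fun _ _ h => h⟩

lemma AtomsLE.symm {u : M.W} {w : N.W} (h : AtomsLE Pp Pm u w) : AtomsLE Pm Pp w u :=
  ⟨h.2, h.1⟩

lemma AtomsLE.sat {φ : ModalForm} {u : M.W} {w : N.W} (hφ : φ.InFragment Pp Pm 0)
    (h : AtomsLE Pp Pm u w) (hu : M.Sat u φ) : N.Sat w φ := by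
  -- negation and implication swap both the polarities and the two models, hence `AtomsLE.symm`
  induction φ generalizing Pp Pm M N with
  | var p => exact h.1 p (inFragment_var.1 hφ) hu
  | bot => exact hu
  | and φ ψ ihφ ihψ =>
    rw [inFragment_and] at hφ
    exact ⟨ihφ hφ.1 h hu.1, ihψ hφ.2 h hu.2⟩
  | or φ ψ ihφ ihψ =>
    rw [inFragment_or] at hφ
    exact hu.imp (ihφ hφ.1 h) (ihψ hφ.2 h)
  | not φ ihφ => exact fun hw => hu (ihφ (inFragment_not.1 hφ) h.symm hw)
  | imp φ ψ ihφ ihψ =>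
    rw [inFragment_imp] at hφ
    exact fun hw => ihψ hφ.2 h (hu (ihφ hφ.1 h.symm hw))
  | box φ => exact absurd hφ not_inFragment_box_zero

lemma AtomsLE.modalArrow {u : M.W} {w : N.W} (h : AtomsLE Pp Pm u w) :
    ModalArrow Pp Pm 0 M u N w :=
  fun _ hpos hneg hdepth => h.sat ⟨hpos, hneg, hdepth⟩

open Classical in
noncomputable def atomType (Pp Pm : Finset ℕ) (M : KModel) (u : M.W) : ModalForm :=
  conj ((Pp.toList.filter (M.val u ·)).map var ++
    (Pm.toList.filter (¬ M.val u ·)).map (ModalForm.not ∘ var))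

lemma sat_atomType {u : M.W} {w : N.W} : N.Sat w (atomType Pp Pm M u) ↔ AtomsLE Pp Pm u w := by
  classical
  simp only [atomType, KModel.sat_conj, List.mem_append, List.mem_map, List.mem_filter,
    Finset.mem_toList, decide_eq_true_eq, Function.comp_apply]
  constructor
  · intro h
    exact ⟨fun p hp hu => h _ (Or.inl ⟨p, ⟨hp, hu⟩, rfl⟩),
      fun p hp hw => by_contra fun hu => h _ (Or.inr ⟨p, ⟨hp, hu⟩, rfl⟩) hw⟩
  · rintro h φ (⟨p, ⟨hp, hu⟩, rfl⟩ | ⟨p, ⟨hp, hu⟩, rfl⟩)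
    · exact h.1 p hp hu
    · exact fun hw => hu (h.2 p hp hw)

lemma inFragment_atomType (u : M.W) : (atomType Pp Pm M u).InFragment Pp Pm 0 := by
  classical
  apply inFragment_conj
  simp only [List.mem_append, List.mem_map, List.mem_filter, Finset.mem_toList]
  rintro φ (⟨p, ⟨hp, -⟩, rfl⟩ | ⟨p, ⟨hp, -⟩, rfl⟩) <;> simpa

def SuccMatches (Pp Pm : Finset ℕ) (S : Set M.W) (w : N.W) : Prop :=
  (∀ u ∈ S, ∃ v, N.R w v ∧ AtomsLE Pp Pm u v) ∧ (∀ v, N.R w v → ∃ u ∈ S, AtomsLE Pp Pm u v)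

noncomputable def succFormula (Pp Pm : Finset ℕ) (M : KModel) {S : Set M.W} (hS : S.Finite) : ModalForm :=
  and (conj (hS.toFinset.toList.map fun u => (atomType Pp Pm M u).dia))
    (box (disj (hS.toFinset.toList.map (atomType Pp Pm M))))

lemma sat_succFormula {S : Set M.W} {hS : S.Finite} {w : N.W} :
    N.Sat w (succFormula Pp Pm M hS) ↔ SuccMatches Pp Pm S w := by
  simp [succFormula, SuccMatches, KModel.Sat, KModel.sat_conj, KModel.sat_disj,
    KModel.sat_dia, sat_atomType]

lemma inFragment_succFormula {S : Set M.W} (hS : S.Finite) :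
    (succFormula Pp Pm M hS).InFragment Pp Pm 1 := by
  simp only [succFormula, inFragment_and, inFragment_box]
  exact ⟨inFragment_conj (by simpa using fun u _ => inFragment_atomType u),
    inFragment_disj (by simpa using fun u _ => inFragment_atomType u)⟩

lemma KModel.Final.succMatches_cluster {c w : M.W} (hc : M.Final c) (hw : w ∈ M.cluster c) :
    SuccMatches Pp Pm (M.cluster c) w :=
  ⟨fun u hu => ⟨u, M.trans _ _ _ hw.2 hu.1, .refl u⟩,
    fun v hv => ⟨v, hc.mem_cluster (M.trans _ _ _ hw.1 hv), .refl v⟩⟩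

lemma KModel.Final.matches_of_succMatches {S : Set M.W} {f : N.W} (hf : N.Final f)
    (h : SuccMatches Pp Pm S f) : Matches Pp Pm M N S (N.cluster f) :=
  ⟨fun u hu => (h.1 u hu).imp fun _ hv => ⟨hf.mem_cluster hv.1, hv.2.modalArrow⟩,
    fun v hv => (h.2 v hv.1).imp fun _ hu => ⟨hu.1, hu.2.modalArrow⟩⟩

end Types

section Transfer

variable {Pp Pm : Finset ℕ} {n : ℕ} {M0 M1 : KModel} {x0 : M0.W} {x1 : M1.W}

lemma ModalArrow.sat (h : ModalArrow Pp Pm n M0 x0 M1 x1) {φ : ModalForm}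
    (hφ : φ.InFragment Pp Pm n) (hx0 : M0.Sat x0 φ) : M1.Sat x1 φ :=
  h φ hφ.1 hφ.2.1 hφ.2.2 hx0

lemma ModalArrow.exists_final_sat [Finite M1.W] (h : ModalArrow Pp Pm 3 M0 x0 M1 x1)
    {A : ModalForm} (hA : A.InFragment Pp Pm 1) {c : M0.W} (hc : M0.R x0 c)
    (hcA : M0.Sat c A.box) : ∃ f, M1.Final f ∧ M1.Sat f A := by
  have hx1 : M1.Sat x1 A.box.dia :=
    h.sat (inFragment_dia.2 (inFragment_box.2 hA)) ((M0.sat_dia _ _).2 ⟨c, hc, hcA⟩)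
  obtain ⟨v, -, hvA⟩ := (M1.sat_dia _ _).1 hx1
  obtain ⟨f, hvf, hf⟩ := M1.exists_final_of_finite v
  exact ⟨f, hf, hvA f hvf⟩

lemma ModalArrow.exists_mem_cluster_sat [Finite M0.W] (h : ModalArrow Pp Pm 3 M0 x0 M1 x1)
    {B : ModalForm} (hB : B.InFragment Pp Pm 1) (hB0 : ∀ u, M0.Final u → M0.Sat u B)
    {f : M1.W} (hf : M1.Final f) (hxf : M1.R x1 f) : ∃ a ∈ M1.cluster f, M1.Sat a B := by
  have hx0 : M0.Sat x0 B.dia.box := fun w _ => by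
    obtain ⟨u, hwu, hu⟩ := M0.exists_final_of_finite w
    exact (M0.sat_dia _ _).2 ⟨u, hwu, hB0 u hu⟩
  obtain ⟨a, hfa, ha⟩ := (M1.sat_dia _ _).1 (h.sat (inFragment_box.2 (inFragment_dia.2 hB)) hx0 f hxf)
  exact ⟨a, hf.mem_cluster hfa, ha⟩

end Transfer

lemma exists_separated_of_two_classes {α κ : Type*} {k : α → κ} {P Q : α → Prop} {c₁ c₂ : κ}
    (hc : c₁ ≠ c₂) (hP : ∃ a, P a) (hQ : ∃ b, Q b) (hk : ∀ a, P a → k a = c₁ ∨ k a = c₂)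
    (h₁ : ∃ e, k e = c₁ ∧ (P e ∨ Q e)) (h₂ : ∃ e, k e = c₂ ∧ (P e ∨ Q e)) :
    ∃ a b, P a ∧ Q b ∧ k a ≠ k b := by
  obtain ⟨a, ha⟩ := hP
  obtain ⟨b, hb⟩ := hQ
  by_cases hab : k a = k b
  · obtain ⟨e, hea, he⟩ : ∃ e, k e ≠ k a ∧ (P e ∨ Q e) := by
      rcases hk a ha with h | h
      · exact h₂.imp fun e he => ⟨he.1.trans_ne (h ▸ hc.symm), he.2⟩
      · exact h₁.imp fun e he => ⟨he.1.trans_ne (h ▸ hc), he.2⟩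
    rcases he with he | he
    · exact ⟨e, b, he, hb, hab ▸ hea⟩
    · exact ⟨a, e, ha, he, hea.symm⟩
  · exact ⟨a, b, ha, hb, hab⟩

theorem stmt7 (Pp Pm : Finset ℕ) (M0 M1 : KModel)
    (hf0 : Finite M0.W) (hf1 : Finite M1.W)
    (x0 : M0.W) (x1 : M1.W)
    (h0 : ∀ y : M0.W, M0.R x0 y) (h1 : ∀ y : M1.W, M1.R x1 y)
    (y0 z0 : M0.W) (hy0 : M0.Final y0) (hz0 : M0.Final z0)
    (hne0 : M0.cluster y0 ≠ M0.cluster z0)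
    (hcov0 : ∀ u : M0.W, M0.Final u → u ∈ M0.cluster y0 ∨ u ∈ M0.cluster z0)
    (y1 z1 : M1.W) (hy1 : M1.Final y1) (hz1 : M1.Final z1)
    (hne1 : M1.cluster y1 ≠ M1.cluster z1)
    (hcov1 : ∀ u : M1.W, M1.Final u → u ∈ M1.cluster y1 ∨ u ∈ M1.cluster z1)
    (h : ModalArrow Pp Pm 3 M0 x0 M1 x1) :
    ∃ a b : M1.W, M1.Final a ∧ M1.Final b ∧ M1.cluster a ≠ M1.cluster b ∧
      Matches Pp Pm M0 M1 (M0.cluster y0) (M1.cluster a) ∧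
      Matches Pp Pm M0 M1 (M0.cluster z0) (M1.cluster b) := by
  have := hf0
  have := hf1
  let β (c : M0.W) : ModalForm := succFormula Pp Pm M0 (M0.cluster c).toFinite
  have hβ_self (c : M0.W) (hc : M0.Final c) : ∀ w ∈ M0.cluster c, M0.Sat w (β c) :=
    fun _ hw => sat_succFormula.2 (hc.succMatches_cluster hw)
  have hβ_final (c : M0.W) (hc : M0.Final c) : ∃ f, M1.Final f ∧ M1.Sat f (β c) :=
    h.exists_final_sat (inFragment_succFormula _) (h0 c) (hc.sat_box_iff.2 (hβ_self c hc))
  have hβ_cover (y : M1.W) (hy : M1.Final y) : ∃ e, M1.cluster e = M1.cluster y ∧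
      ((M1.Final e ∧ M1.Sat e (β y0)) ∨ (M1.Final e ∧ M1.Sat e (β z0))) := by
    obtain ⟨e, he, hsat⟩ := h.exists_mem_cluster_sat (B := (β y0).or (β z0))
      (inFragment_or.2 ⟨inFragment_succFormula _, inFragment_succFormula _⟩)
      (fun u hu => (hcov0 u hu).imp (hβ_self y0 hy0 u) (hβ_self z0 hz0 u)) hy (h1 y)
    have he_final := hy.of_mem_cluster he
    exact ⟨e, (M1.cluster_eq_of_mem he).symm, Or.imp (⟨he_final, ·⟩) (⟨he_final, ·⟩) hsat⟩
  obtain ⟨a, b, ⟨ha, haβ⟩, ⟨hb, hbβ⟩, hab⟩ := exists_separated_of_two_classes hne1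
    (hβ_final y0 hy0) (hβ_final z0 hz0)
    (fun a ha => (hcov1 a ha.1).imp (M1.cluster_eq_of_mem · |>.symm)
      (M1.cluster_eq_of_mem · |>.symm))
    (hβ_cover y1 hy1) (hβ_cover z1 hz1)
  exact ⟨a, b, ha, hb, hab, ha.matches_of_succMatches (sat_succFormula.1 haβ),
    hb.matches_of_succMatches (sat_succFormula.1 hbβ)⟩
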